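/- arXiv:1310.2056 — 6 statements merged into one kernel-verified Lean document; each statement's English description precedes it below -/
import Mathlib

section
/- Define sequences T₁(n), N(n) of polynomials in ℤ[x,y] by T₁(0) = 1, N(0) = 1, T₁(n) = y·T₁(n-1)² + 2·T₁(n-1)·N(n-1) + (x-1)·N(n-1)², N(n) = 2·T₁(n-1)·N(n-1) + (x-1)·N(n-1)². Then for every n ≥ 0, evaluating T(n) := T₁(n) + (x-1)·N(n) at y = 0 gives T(n)(x,0) = x·(x+1)^{2^n - 1}. -/
open Polynomial

/-! At `y = 0` the two recurrences agree, so `T₁ n` and `N n` have the same value `v n` there,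
with `v 0 = 1` and `v (n + 1) = (2 + (x - 1)) · v n² = (x + 1) · v n²`; hence
`v n = (x + 1)^(2^n - 1)` and `T n (x, 0) = v n + (x - 1) · v n = x · v n`. -/

theorem eq_pow_two_pow_sub_one_of_succ_eq_mul_sq {M : Type*} [Monoid M] {a : M} {v : ℕ → M}
    (h0 : v 0 = 1) (hsucc : ∀ n, v (n + 1) = a * v n ^ 2) (n : ℕ) :
    v n = a ^ (2 ^ n - 1) := by
  induction n with
  | zero => simp [h0]
  | succ n ih =>
    have hexp : 2 ^ (n + 1) - 1 = 1 + (2 ^ n - 1) * 2 := by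
      have := Nat.one_le_two_pow (n := n)
      rw [pow_succ]
      omega
    rw [hsucc, ih, hexp, pow_add, pow_one, pow_mul]

/-- In `ℤ[x][y]` (outer variable `y = X`, inner variable `x = C X`), define
`T₁ 0 = 1`, `N 0 = 1`, `T₁ (n+1) = y·T₁ n² + 2·T₁ n·N n + (x-1)·N n²`,
`N (n+1) = 2·T₁ n·N n + (x-1)·N n²`, and set `T n = T₁ n + (x-1)·N n`.
Then evaluating at `y = 0` gives `T n (x, 0) = x·(x+1)^(2^n - 1)`. -/
theorem farey_tutte_at_y_zero
    (T₁ N : ℕ → Polynomial (Polynomial ℤ))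
    (h10 : T₁ 0 = 1) (hN0 : N 0 = 1)
    (h1 : ∀ n, T₁ (n + 1) =
      X * (T₁ n) ^ 2 + 2 * T₁ n * N n + (C X - 1) * (N n) ^ 2)
    (hN : ∀ n, N (n + 1) = 2 * T₁ n * N n + (C X - 1) * (N n) ^ 2) :
    ∀ n, (T₁ n + (C X - 1) * N n).eval 0 = X * (X + 1) ^ (2 ^ n - 1) := by
  have hT₁_eq_N : ∀ n, (T₁ n).eval 0 = (N n).eval 0 := by
    rintro (_ | n)
    · simp [h10, hN0]
    · simp [h1, hN]
  have hN_succ : ∀ n, (N (n + 1)).eval 0 = (X + 1) * (N n).eval 0 ^ 2 := by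
    intro n
    simp only [hN, eval_add, eval_mul, eval_pow, eval_ofNat, eval_sub, eval_C, eval_one,
      hT₁_eq_N]
    ring
  have hN_eval : ∀ n, (N n).eval 0 = (X + 1) ^ (2 ^ n - 1) :=
    eq_pow_two_pow_sub_one_of_succ_eq_mul_sq (by simp [hN0]) hN_succ
  intro n
  simp only [eval_add, eval_mul, eval_sub, eval_C, eval_one, hT₁_eq_N, hN_eval]
  ring
end

section
/- Define a sequence of natural numbers by T(0) = 1 and T(n) = (2(n+1)/n)·T(n-1)² for n ≥ 1 (each such quotient is an integer). Then T(n) = 2^{2^n − 1}·(n+1)·∏_{i=2}^{n} i^{2^{n−i}} for all n ≥ 1. -/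
/-!
Write `P n = ∏_{i=2}^{n} i^(2^(n-i))`. Peeling off the top factor gives `P (n+1) = (n+1) · P n ^ 2`,
and from this the closed form `C n = 2^(2^n-1) · (n+1) · P n` satisfies `(n+1) · C (n+1) = 2(n+2) · C n ^ 2`,
which is the recursion of `T` with the denominator cleared. Both start at `1`, and the cleared
recursion determines a sequence of naturals from its initial value, so `T = C`.
-/

open Finset

theorem Finset.prod_Icc_pow_two_pow_sub_succ {M : Type*} [CommMonoid M] (f : ℕ → M) {a n : ℕ}
    (ha : a ≤ n + 1) :
    ∏ i ∈ Icc a (n + 1), f i ^ 2 ^ (n + 1 - i) =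
      f (n + 1) * (∏ i ∈ Icc a n, f i ^ 2 ^ (n - i)) ^ 2 := by
  rw [prod_Icc_succ_top ha, Nat.sub_self, pow_zero, pow_one, mul_comm, ← prod_pow]
  congr 1
  refine prod_congr rfl fun i hi => ?_
  rw [← pow_mul, Nat.sub_add_comm (mem_Icc.mp hi).2, pow_succ]

theorem Nat.eq_of_succ_mul_succ_eq {a b : ℕ → ℕ} (F : ℕ → ℕ → ℕ) (h0 : a 0 = b 0)
    (ha : ∀ n, (n + 1) * a (n + 1) = F n (a n)) (hb : ∀ n, (n + 1) * b (n + 1) = F n (b n)) :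
    a = b := by
  funext n
  induction n with
  | zero => exact h0
  | succ n ih => exact Nat.eq_of_mul_eq_mul_left n.succ_pos ((ha n).trans (ih ▸ hb n).symm)

def fareyClosedForm (n : ℕ) : ℕ := 2 ^ (2 ^ n - 1) * (n + 1) * ∏ i ∈ Icc 2 n, i ^ (2 ^ (n - i))

theorem fareyClosedForm_zero : fareyClosedForm 0 = 1 := rfl

theorem succ_mul_fareyClosedForm_succ (n : ℕ) :
    (n + 1) * fareyClosedForm (n + 1) = 2 * (n + 2) * fareyClosedForm n ^ 2 := by
  obtain rfl | hn := n.eq_zero_or_pos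
  · rfl
  have hexp : 2 ^ (n + 1) - 1 = 2 * (2 ^ n - 1) + 1 := by
    have := Nat.one_le_two_pow (n := n)
    rw [Nat.pow_succ]
    omega
  unfold fareyClosedForm
  rw [prod_Icc_pow_two_pow_sub_succ (fun i => i) (by omega), hexp]
  ring

/-- Let `T : ℕ → ℕ` with `T 0 = 1` and `T n = (2(n+1)/n)·T(n-1)²` for `n ≥ 1`
(stated over `ℚ`, since each quotient is an integer).  Then
`T n = 2^(2^n - 1) · (n+1) · ∏_{i=2}^{n} i^(2^(n-i))` for all `n ≥ 1`. -/
theorem farey_connected_spanning_subgraphs (T : ℕ → ℕ) (h0 : T 0 = 1)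
    (hrec : ∀ n, 1 ≤ n → (T n : ℚ) = 2 * (n + 1) / n * (T (n - 1) : ℚ) ^ 2) :
    ∀ n, 1 ≤ n →
      T n = 2 ^ (2 ^ n - 1) * (n + 1) * ∏ i ∈ Icc 2 n, i ^ (2 ^ (n - i)) := by
  have hcleared : ∀ n, (n + 1) * T (n + 1) = 2 * (n + 2) * T n ^ 2 := fun n => by
    have h := hrec (n + 1) n.succ_pos
    rw [Nat.add_sub_cancel, div_mul_eq_mul_div, eq_div_iff (by positivity)] at h
    have hq : ((n + 1) * T (n + 1) : ℚ) = 2 * (n + 2) * T n ^ 2 := by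
      push_cast at h
      linear_combination h
    exact_mod_cast hq
  have hT : T = fareyClosedForm :=
    Nat.eq_of_succ_mul_succ_eq (fun n x => 2 * (n + 2) * x ^ 2)
      (h0.trans fareyClosedForm_zero.symm) hcleared succ_mul_fareyClosedForm_succ
  exact fun n _ => congrFun hT n
end

section
/- Define a sequence by T(0) = 1 and T(n) = ((2^{n+1} − 1)/(2^n − 1))·T(n-1)² for n ≥ 1 (working in ℚ). Then T(n) = (2^{n+1} − 1)·∏_{i=2}^{n} (2^i − 1)^{2^{n−i}} for all n ≥ 1; in particular T(n) is a positive integer. -/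
/-!
Squaring `T (n - 1)` doubles the exponent of each of its factors, and dividing by `2^n - 1`
lowers the square of its leading factor `2^n - 1` back to the first power. So the Mersenne number
`2^i - 1`, which leads at step `i - 1`, carries exponent `2^(n-i)` at step `n`, and `T n` is a
product of positive Mersenne numbers.
-/

open Finset

theorem prod_Icc_pow_two_pow_sq_mul {M : Type*} [CommMonoid M] (c : ℕ → M) {a n : ℕ}
    (ha : a ≤ n + 1) :
    (∏ i ∈ Icc a n, c i ^ 2 ^ (n - i)) ^ 2 * c (n + 1) =
      ∏ i ∈ Icc a (n + 1), c i ^ 2 ^ (n + 1 - i) := by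
  rw [prod_Icc_succ_top ha, Nat.sub_self, pow_zero, pow_one, ← prod_pow]
  congr 1
  refine prod_congr rfl fun i hi => ?_
  rw [← pow_mul, ← pow_succ, Nat.sub_add_comm (mem_Icc.mp hi).2]

theorem Nat.cast_mersenne {R : Type*} [Ring R] (k : ℕ) : (mersenne k : R) = 2 ^ k - 1 := by
  rw [eq_sub_iff_add_eq, ← Nat.cast_ofNat, ← Nat.cast_pow, ← succ_mersenne, Nat.cast_succ]

def fareySpanningTreeCount (n : ℕ) : ℕ :=
  mersenne (n + 1) * ∏ i ∈ Icc 2 n, mersenne i ^ 2 ^ (n - i)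

theorem fareySpanningTreeCount_pos (n : ℕ) : 0 < fareySpanningTreeCount n :=
  Nat.mul_pos (mersenne_pos.mpr n.succ_pos) <|
    prod_pos fun i hi => pow_pos (mersenne_pos.mpr (by linarith [(mem_Icc.mp hi).1])) _

theorem mersenne_mul_fareySpanningTreeCount_succ {n : ℕ} (hn : 1 ≤ n) :
    mersenne (n + 1) * fareySpanningTreeCount (n + 1) =
      mersenne (n + 2) * fareySpanningTreeCount n ^ 2 := by
  unfold fareySpanningTreeCount
  rw [← prod_Icc_pow_two_pow_sq_mul mersenne (by omega : 2 ≤ n + 1)]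
  ring

theorem cast_fareySpanningTreeCount {R : Type*} [CommRing R] (n : ℕ) :
    (fareySpanningTreeCount n : R) =
      (2 ^ (n + 1) - 1) * ∏ i ∈ Icc 2 n, ((2 : R) ^ i - 1) ^ 2 ^ (n - i) := by
  simp only [fareySpanningTreeCount, Nat.cast_mul, Nat.cast_prod, Nat.cast_pow,
    Nat.cast_mersenne]

theorem eq_fareySpanningTreeCount_of_rec (T : ℕ → ℚ) (h0 : T 0 = 1)
    (hrec : ∀ n, 1 ≤ n → T n = ((2 ^ (n + 1) - 1) / (2 ^ n - 1)) * T (n - 1) ^ 2) :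
    ∀ n, 1 ≤ n → T n = fareySpanningTreeCount n := by
  refine Nat.le_induction ?_ fun n hn ih => ?_
  · rw [hrec 1 le_rfl, h0]
    norm_num [fareySpanningTreeCount, mersenne]
  · have hstep : (mersenne (n + 1) : ℚ) * fareySpanningTreeCount (n + 1) =
        mersenne (n + 2) * (fareySpanningTreeCount n : ℚ) ^ 2 := by
      exact_mod_cast mersenne_mul_fareySpanningTreeCount_succ hn
    have hne : (mersenne (n + 1) : ℚ) ≠ 0 := by
      exact_mod_cast (mersenne_pos.mpr n.succ_pos).ne'
    rw [hrec (n + 1) (by omega), Nat.add_sub_cancel, ih, ← Nat.cast_mersenne,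
      ← Nat.cast_mersenne, div_mul_eq_mul_div, ← hstep, mul_div_cancel_left₀ _ hne]

/-- Let `T : ℕ → ℚ` with `T 0 = 1` and `T n = ((2^(n+1)-1)/(2^n-1))·T(n-1)²` for `n ≥ 1`.
Then `T n = (2^(n+1)-1)·∏_{i=2}^{n} (2^i-1)^(2^(n-i))` for all `n ≥ 1`; in particular
`T n` is a positive integer. -/
theorem farey_spanning_trees (T : ℕ → ℚ) (h0 : T 0 = 1)
    (hrec : ∀ n, 1 ≤ n →
      T n = ((2 ^ (n + 1) - 1) / (2 ^ n - 1)) * (T (n - 1)) ^ 2) :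
    ∀ n, 1 ≤ n →
      T n = (2 ^ (n + 1) - 1) * ∏ i ∈ Icc 2 n, ((2 : ℚ) ^ i - 1) ^ (2 ^ (n - i)) ∧
      ∃ m : ℕ, 0 < m ∧ T n = m := by
  intro n hn
  have hT := eq_fareySpanningTreeCount_of_rec T h0 hrec n hn
  exact ⟨hT.trans (cast_fareySpanningTreeCount n),
    fareySpanningTreeCount n, fareySpanningTreeCount_pos n, hT⟩
end

section
/- Fix a real y with 0 < y and y ≠ 2. Define T(0) = 1 and T(n) = ((2^{n+1} − y^{n+1})/(2^n − y^n))·T(n-1)² for n ≥ 1. Then T(n) = (2^{n+1} − y^{n+1})·(2 − y)^{−2^{n−1}}·∏_{i=2}^{n} (2^i − y^i)^{2^{n−i}} for all n ≥ 1. -/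
open Finset

/-!
Dividing the recursion by `f (n + 1)`, where `f m = 2 ^ m - y ^ m`, turns it into
`U n = f n * U (n - 1) ^ 2` with `U 0 = f 1⁻¹`, which unrolls to
`U n = f 1 ^ (-2 ^ n) * ∏_{1 ≤ i ≤ n} f i ^ 2 ^ (n - i)`. Cancelling `f (n + 1)` is legitimate
because `2 ^ m ≠ y ^ m` for `m ≥ 1` when `0 < y ≠ 2`.
-/

theorem prod_Icc_two_pow_sub_succ {M : Type*} [CommMonoid M] (f : ℕ → M) {n : ℕ} (hn : 1 ≤ n) :
    ∏ i ∈ Icc 2 (n + 1), f i ^ 2 ^ (n + 1 - i) = (∏ i ∈ Icc 2 n, f i ^ 2 ^ (n - i)) ^ 2 * f (n + 1) := by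
  rw [prod_Icc_succ_top (by omega), Nat.sub_self, pow_zero, pow_one, ← prod_pow]
  congr 1
  refine prod_congr rfl fun i hi => ?_
  rw [← pow_mul, Nat.sub_add_comm (mem_Icc.mp hi).2, pow_succ]

theorem zpow_neg_two_pow_sq {G : Type*} [DivisionMonoid G] (a : G) {n : ℕ} (hn : 1 ≤ n) :
    (a ^ (-(2 ^ (n - 1) : ℤ))) ^ 2 = a ^ (-(2 ^ n : ℤ)) := by
  obtain ⟨k, rfl⟩ := Nat.exists_eq_add_of_le' hn
  rw [← zpow_natCast, ← zpow_mul]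
  congr 1
  push_cast
  ring

theorem eq_closed_form_of_sq_recurrence {K : Type*} [Field K] (f T : ℕ → K)
    (hf : ∀ m, 2 ≤ m → f m ≠ 0) (h0 : T 0 = 1)
    (hrec : ∀ n, 1 ≤ n → T n = f (n + 1) / f n * T (n - 1) ^ 2) :
    ∀ n, 1 ≤ n → T n = f (n + 1) * f 1 ^ (-(2 ^ (n - 1) : ℤ)) * ∏ i ∈ Icc 2 n, f i ^ 2 ^ (n - i) := by
  intro n hn
  induction n, hn using Nat.le_induction with
  | base => simp [hrec 1 le_rfl, h0, div_eq_mul_inv]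
  | succ n hn ih =>
    rw [hrec (n + 1) (by omega), Nat.add_sub_cancel, ih, prod_Icc_two_pow_sub_succ f hn, ← zpow_neg_two_pow_sq (f 1) hn]
    have hfn : f (n + 1) ≠ 0 := hf (n + 1) (by omega)
    field_simp

/-- Fix a real `y` with `0 < y`, `y ≠ 2`.  Let `T 0 = 1` and
`T n = ((2^(n+1) - y^(n+1))/(2^n - y^n))·T(n-1)²` for `n ≥ 1`.  Then
`T n = (2^(n+1) - y^(n+1))·(2-y)^(-2^(n-1))·∏_{i=2}^{n} (2^i - y^i)^(2^(n-i))`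
for all `n ≥ 1`. -/
theorem farey_tutte_x_one_closed_form (y : ℝ) (hy0 : 0 < y) (hy2 : y ≠ 2)
    (T : ℕ → ℝ) (h0 : T 0 = 1)
    (hrec : ∀ n, 1 ≤ n →
      T n = ((2 ^ (n + 1) - y ^ (n + 1)) / (2 ^ n - y ^ n)) * (T (n - 1)) ^ 2) :
    ∀ n, 1 ≤ n →
      T n = (2 ^ (n + 1) - y ^ (n + 1)) * (2 - y) ^ (-(2 ^ (n - 1) : ℤ)) *
        ∏ i ∈ Icc 2 n, ((2 : ℝ) ^ i - y ^ i) ^ (2 ^ (n - i)) := by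
  have hf : ∀ m, 2 ≤ m → (2 : ℝ) ^ m - y ^ m ≠ 0 := fun m hm =>
    sub_ne_zero.mpr fun h => hy2 ((pow_left_inj₀ zero_le_two hy0.le (by omega)).mp h).symm
  simpa only [pow_one] using eq_closed_form_of_sq_recurrence (fun m => (2 : ℝ) ^ m - y ^ m) T hf h0 hrec
end

section
/- With T₁(n), N(n) defined by T₁(0) = N(0) = 1, T₁(n) = y·T₁(n-1)² + 2·T₁(n-1)·N(n-1) + (x-1)·N(n-1)², N(n) = 2·T₁(n-1)·N(n-1) + (x-1)·N(n-1)², the chromatic polynomial of the Farey graph G_n equals λ·(1−λ)·(2−λ)^{2^n − 1}; equivalently, (T₁(n) + (x−1)N(n)) evaluated at (x,y) = (1−λ, 0), multiplied by (−1)^{2^n}·λ, equals λ(1−λ)(2−λ)^{2^n−1}. -/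
/-!
At `y = 0` the term `y·T₁²` drops out, so `T₁` and `N` obey the same recursion and agree, and
then `N (n+1) = (x+1)·(N n)²` there. Hence `N n (x,0) = (x+1)^(2^n-1)` and
`T n (x,0) = x·(x+1)^(2^n-1)`; substituting `x = 1-λ` gives `(1-λ)(2-λ)^(2^n-1)`, and the sign
`(-1)^(2^n)` is `1` once `n ≥ 1`.
-/

open Polynomial

theorem pow_two_pow_sub_one_of_succ_eq_mul_sq {M : Type*} [CommMonoid M] {u : ℕ → M} {c : M}
    (h0 : u 0 = 1) (hsucc : ∀ n, u (n + 1) = c * u n ^ 2) (n : ℕ) :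
    u n = c ^ (2 ^ n - 1) := by
  induction n with
  | zero => simp [h0]
  | succ n ih =>
    have hexp : 2 ^ (n + 1) - 1 = 1 + (2 ^ n - 1) * 2 := by
      have := Nat.one_le_two_pow (n := n)
      rw [pow_succ]
      omega
    rw [hsucc, ih, hexp, pow_add, pow_one, pow_mul]

section TutteAtYZero

variable {R : Type*} [CommRing R] {x : R} {T₁ N : ℕ → R[X]}

theorem eval_zero_T₁_eq_eval_zero_N (h10 : T₁ 0 = 1) (hN0 : N 0 = 1)
    (h1 : ∀ n, T₁ (n + 1) = X * T₁ n ^ 2 + 2 * T₁ n * N n + (C x - 1) * N n ^ 2)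
    (hN : ∀ n, N (n + 1) = 2 * T₁ n * N n + (C x - 1) * N n ^ 2) :
    ∀ n, (T₁ n).eval 0 = (N n).eval 0
  | 0 => by rw [h10, hN0]
  | n + 1 => by simp [h1, hN]

theorem eval_zero_N_eq_pow (h10 : T₁ 0 = 1) (hN0 : N 0 = 1)
    (h1 : ∀ n, T₁ (n + 1) = X * T₁ n ^ 2 + 2 * T₁ n * N n + (C x - 1) * N n ^ 2)
    (hN : ∀ n, N (n + 1) = 2 * T₁ n * N n + (C x - 1) * N n ^ 2) (n : ℕ) :
    (N n).eval 0 = (x + 1) ^ (2 ^ n - 1) := by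
  refine pow_two_pow_sub_one_of_succ_eq_mul_sq (u := fun n ↦ (N n).eval 0)
    (by simp [hN0]) (fun n ↦ ?_) n
  have hTN := eval_zero_T₁_eq_eval_zero_N h10 hN0 h1 hN n
  simp only [hN, eval_add, eval_mul, eval_sub, eval_pow, eval_C, eval_one, eval_ofNat, hTN]
  ring

theorem eval_zero_tutte_eq (h10 : T₁ 0 = 1) (hN0 : N 0 = 1)
    (h1 : ∀ n, T₁ (n + 1) = X * T₁ n ^ 2 + 2 * T₁ n * N n + (C x - 1) * N n ^ 2)
    (hN : ∀ n, N (n + 1) = 2 * T₁ n * N n + (C x - 1) * N n ^ 2) (n : ℕ) :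
    (T₁ n + (C x - 1) * N n).eval 0 = x * (x + 1) ^ (2 ^ n - 1) := by
  simp only [eval_add, eval_mul, eval_sub, eval_C, eval_one,
    eval_zero_T₁_eq_eval_zero_N h10 hN0 h1 hN n, eval_zero_N_eq_pow h10 hN0 h1 hN n]
  ring

end TutteAtYZero

theorem X_mul_X_add_one_pow_comp_one_sub_X {R : Type*} [CommRing R] (k : ℕ) :
    (X * (X + 1) ^ k : R[X]).comp (1 - X) = (1 - X) * (2 - X) ^ k := by
  simp only [mul_comp, pow_comp, add_comp, X_comp, one_comp]
  ring

/-- With the Farey graph Tutte recursion in `ℤ[x][y]` (`y = X` outer, `x = C X` inner):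
`T₁ 0 = N 0 = 1`, `T₁ (n+1) = y·T₁ n² + 2·T₁ n·N n + (x-1)·N n²`,
`N (n+1) = 2·T₁ n·N n + (x-1)·N n²`.  For `n ≥ 1`, the chromatic polynomial of the Farey
graph `G_n` equals `λ(1-λ)(2-λ)^(2^n-1)`: substituting `(x,y) = (1-λ, 0)` into
`T n = T₁ n + (x-1)·N n` and multiplying by `(-1)^(2^n)·λ` gives
`λ·(1-λ)·(2-λ)^(2^n-1)` (as a polynomial identity in `λ`). -/
theorem farey_chromatic_polynomial
    (T₁ N : ℕ → Polynomial (Polynomial ℤ))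
    (h10 : T₁ 0 = 1) (hN0 : N 0 = 1)
    (h1 : ∀ n, T₁ (n + 1) =
      X * (T₁ n) ^ 2 + 2 * T₁ n * N n + (C X - 1) * (N n) ^ 2)
    (hN : ∀ n, N (n + 1) = 2 * T₁ n * N n + (C X - 1) * (N n) ^ 2) :
    ∀ n, 1 ≤ n →
      (-1 : Polynomial ℤ) ^ (2 ^ n) * X *
          (((T₁ n + (C X - 1) * N n).eval 0).comp (1 - X)) =
        X * (1 - X) * (2 - X) ^ (2 ^ n - 1) := by
  intro n hn
  have hsign : (-1 : Polynomial ℤ) ^ (2 ^ n) = 1 :=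
    (Nat.even_pow.mpr ⟨even_two, by omega⟩).neg_one_pow
  rw [hsign, one_mul, eval_zero_tutte_eq h10 hN0 h1 hN, X_mul_X_add_one_pow_comp_one_sub_X,
    mul_assoc]
end

section
/- For the Farey graph Tutte recursion with T₁(0)=1, N(0)=1 in ℤ[x,y], the evaluations at x = 1 satisfy T₁(n)(1,y) = y·T₁(n-1)² + 2·T₁(n-1)·N(n-1) and N(n)(1,y) = 2·T₁(n-1)·N(n-1), and consequently the total T(n)(1,y) = T₁(n)(1,y) satisfies T(n+1)/T(n)² = (2+y) − 2y·T(n-1)²/T(n) for n ≥ 1. -/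
open Polynomial

/-! At `x = 1` the correction terms `(x - 1)·N²` vanish, so the recursion becomes
`T₁' = y·T₁² + 2·T₁·N`, `N' = 2·T₁·N` and `T = T₁`.  Eliminating `N` through
`2·T₁·N = T₁' - y·T₁²` gives a recursion in `T₁` alone. -/

theorem map_evalRingHom_one_add_C_X_sub_one_mul {R : Type*} [CommRing R] (p q : R[X][X]) :
    (p + (C X - 1) * q).map (evalRingHom 1) = p.map (evalRingHom 1) := by
  simp

theorem eq_sq_sub_of_recursion {R : Type*} [CommRing R] {y a b a' b' a'' : R}
    (ha' : a' = y * a ^ 2 + 2 * a * b) (hb' : b' = 2 * a * b)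
    (ha'' : a'' = y * a' ^ 2 + 2 * a' * b') :
    a'' = (2 + y) * a' ^ 2 - 2 * y * a ^ 2 * a' := by
  linear_combination ha'' + 2 * a' * hb' - 2 * a' * ha'

theorem farey_tutte_x_one_recursion_general
    (T₁ N : ℕ → Polynomial (Polynomial ℤ))
    (h1 : ∀ n, T₁ (n + 1) =
      X * (T₁ n) ^ 2 + 2 * T₁ n * N n + (C X - 1) * (N n) ^ 2)
    (hN : ∀ n, N (n + 1) = 2 * T₁ n * N n + (C X - 1) * (N n) ^ 2) :
    ∀ n, 1 ≤ n →
      ((T₁ n).map (evalRingHom 1) =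
        X * ((T₁ (n - 1)).map (evalRingHom 1)) ^ 2 +
          2 * (T₁ (n - 1)).map (evalRingHom 1) * (N (n - 1)).map (evalRingHom 1)) ∧
      ((N n).map (evalRingHom 1) =
        2 * (T₁ (n - 1)).map (evalRingHom 1) * (N (n - 1)).map (evalRingHom 1)) ∧
      ((T₁ (n + 1) + (C X - 1) * N (n + 1)).map (evalRingHom 1) =
        (2 + X) * ((T₁ n + (C X - 1) * N n).map (evalRingHom 1)) ^ 2 -
          2 * X * ((T₁ (n - 1) + (C X - 1) * N (n - 1)).map (evalRingHom 1)) ^ 2 *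
            (T₁ n + (C X - 1) * N n).map (evalRingHom 1)) := by
  have hT₁_one (n : ℕ) : (T₁ (n + 1)).map (evalRingHom 1) =
      X * ((T₁ n).map (evalRingHom 1)) ^ 2 +
        2 * (T₁ n).map (evalRingHom 1) * (N n).map (evalRingHom 1) := by
    rw [h1 n, map_evalRingHom_one_add_C_X_sub_one_mul]
    simp
  have hN_one (n : ℕ) : (N (n + 1)).map (evalRingHom 1) =
      2 * (T₁ n).map (evalRingHom 1) * (N n).map (evalRingHom 1) := by
    rw [hN n, map_evalRingHom_one_add_C_X_sub_one_mul]
    simp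
  rintro (_ | n) hn
  · omega
  · simp only [Nat.add_sub_cancel, map_evalRingHom_one_add_C_X_sub_one_mul]
    exact ⟨hT₁_one n, hN_one n,
      eq_sq_sub_of_recursion (hT₁_one n) (hN_one n) (hT₁_one (n + 1))⟩

/-- Farey graph Tutte recursion in `ℤ[x][y]` (`y = X` outer, `x = C X` inner):
`T₁ 0 = N 0 = 1`, `T₁ (n+1) = y·T₁ n² + 2·T₁ n·N n + (x-1)·N n²`,
`N (n+1) = 2·T₁ n·N n + (x-1)·N n²`, `T n = T₁ n + (x-1)·N n`.  Evaluating at `x = 1`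
(mapping each coefficient by `eval 1`, yielding polynomials in `y`):
`T₁ n (1,y) = y·T₁ (n-1)² + 2·T₁ (n-1)·N (n-1)`, `N n (1,y) = 2·T₁ (n-1)·N (n-1)`,
and `T (n+1) = (2+y)·T n² - 2y·T (n-1)²·T n` at `x = 1`, for all `n ≥ 1`. -/
theorem farey_tutte_x_one_recursion
    (T₁ N : ℕ → Polynomial (Polynomial ℤ))
    (h10 : T₁ 0 = 1) (hN0 : N 0 = 1)
    (h1 : ∀ n, T₁ (n + 1) =
      X * (T₁ n) ^ 2 + 2 * T₁ n * N n + (C X - 1) * (N n) ^ 2)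
    (hN : ∀ n, N (n + 1) = 2 * T₁ n * N n + (C X - 1) * (N n) ^ 2) :
    ∀ n, 1 ≤ n →
      ((T₁ n).map (evalRingHom 1) =
        X * ((T₁ (n - 1)).map (evalRingHom 1)) ^ 2 +
          2 * (T₁ (n - 1)).map (evalRingHom 1) * (N (n - 1)).map (evalRingHom 1)) ∧
      ((N n).map (evalRingHom 1) =
        2 * (T₁ (n - 1)).map (evalRingHom 1) * (N (n - 1)).map (evalRingHom 1)) ∧
      ((T₁ (n + 1) + (C X - 1) * N (n + 1)).map (evalRingHom 1) =
        (2 + X) * ((T₁ n + (C X - 1) * N n).map (evalRingHom 1)) ^ 2 -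
          2 * X * ((T₁ (n - 1) + (C X - 1) * N (n - 1)).map (evalRingHom 1)) ^ 2 *
            (T₁ n + (C X - 1) * N n).map (evalRingHom 1)) :=
  farey_tutte_x_one_recursion_general T₁ N h1 hN
end
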